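/- arXiv:1105.1853 — 2 statements merged into one kernel-verified Lean document; each statement's English description precedes it below -/
import Mathlib

section
/- Let J be an n×n symmetric positive definite matrix with unit diagonal and R = I - J having all entries nonnegative (attractive model). Let S₁ ⊆ S₂ ⊆ {1,...,n} and let i ∉ S₂. Let T₁ be the complement of S₁ and T₂ the complement of S₂, so that i ∈ T₂ ⊆ T₁. Then ((J_{T₂})^{-1})_{ii} ≤ ((J_{T₁})^{-1})_{ii} ≤ (J^{-1})_{ii}, i.e., removing nodes from an attractive walk-summable model can only decrease the diagonal of the inverse of the principal submatrix. -/
set_option linter.unusedSectionVars false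

open Matrix

section Aux

variable {m l : Type*} [Fintype m] [Fintype l] [DecidableEq m] [DecidableEq l]

private lemma dot_extend (f : m → l) (hf : Function.Injective f) (x : m → ℝ) (w : l → ℝ) :
    Function.extend f x 0 ⬝ᵥ w = ∑ k, x k * w (f k) := by
  unfold dotProduct
  have h1 : ∑ j : l, Function.extend f x 0 j * w j
      = ∑ j ∈ Finset.univ.image f, Function.extend f x 0 j * w j := by
    refine (Finset.sum_subset (Finset.subset_univ _) ?_).symm
    intro j _ hj
    rw [Function.extend_apply' _ _ _ (by simpa [Finset.mem_image] using hj)]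
    simp
  rw [h1, Finset.sum_image (fun a _ b _ h => hf h)]
  exact Finset.sum_congr rfl fun k _ => by rw [hf.extend_apply]

private lemma quad_extend (B : Matrix l l ℝ) (f : m → l) (hf : Function.Injective f)
    (x : m → ℝ) :
    Function.extend f x 0 ⬝ᵥ B *ᵥ Function.extend f x 0 = x ⬝ᵥ (B.submatrix f f) *ᵥ x := by
  rw [dot_extend f hf]
  refine Finset.sum_congr rfl fun k _ => ?_
  have : (B *ᵥ Function.extend f x 0) (f k) = ((B.submatrix f f) *ᵥ x) k := by
    show (fun j => B (f k) j) ⬝ᵥ Function.extend f x 0 = _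
    rw [dotProduct_comm, dot_extend f hf]
    simp [mulVec, dotProduct, submatrix, mul_comm]
  rw [this]

private lemma posdef_submatrix {B : Matrix l l ℝ} (hB : B.PosDef) (f : m → l)
    (hf : Function.Injective f) : (B.submatrix f f).PosDef := by
  refine Matrix.posDef_iff_dotProduct_mulVec.mpr ⟨hB.1.submatrix f, fun x hx => ?_⟩
  have hz : Function.extend f x 0 ≠ 0 := by
    intro h
    apply hx
    funext k
    have := congrFun h (f k)
    rwa [hf.extend_apply] at this
  have := hB.dotProduct_mulVec_pos (x := Function.extend f x 0) hz
  simpa [star_trivial, quad_extend B f hf] using this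

private lemma self_le {l : Type*} [Fintype l] [DecidableEq l]
    {A : Matrix l l ℝ} (hA : A.PosDef) (i : l) (x : l → ℝ) :
    2 * x i - x ⬝ᵥ A *ᵥ x ≤ A⁻¹ i i := by
  have hinv : A * A⁻¹ = 1 := Matrix.mul_nonsing_inv A hA.det_pos.ne'.isUnit
  set e : l → ℝ := Pi.single i 1 with he
  set w : l → ℝ := A⁻¹ *ᵥ e with hw
  have hAw : A *ᵥ w = e := by rw [hw, mulVec_mulVec, hinv, one_mulVec]
  have hsym : Aᵀ = A := hA.1
  have key := hA.posSemidef.dotProduct_mulVec_nonneg (x - w)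
  rw [star_trivial, mulVec_sub, hAw, sub_dotProduct, dotProduct_sub, dotProduct_sub] at key
  have h1 : x ⬝ᵥ e = x i := by simp [he, dotProduct_single]
  have h2 : w ⬝ᵥ (A *ᵥ x) = x i := by
    rw [dotProduct_mulVec, ← mulVec_transpose, hsym, hAw, dotProduct_comm, h1]
  have h3 : w ⬝ᵥ e = A⁻¹ i i := by
    simp [hw, he, dotProduct_single, mulVec_single]
  rw [h1, h2, h3] at key
  linarith

private lemma eq_inv {l : Type*} [Fintype l] [DecidableEq l]
    {A : Matrix l l ℝ} (hA : A.PosDef) (i : l) :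
    2 * (A⁻¹ *ᵥ Pi.single i 1) i - (A⁻¹ *ᵥ Pi.single i 1) ⬝ᵥ A *ᵥ (A⁻¹ *ᵥ Pi.single i 1)
      = A⁻¹ i i := by
  have hinv : A * A⁻¹ = 1 := Matrix.mul_nonsing_inv A hA.det_pos.ne'.isUnit
  have hAw : A *ᵥ (A⁻¹ *ᵥ Pi.single i 1) = Pi.single i 1 := by
    rw [mulVec_mulVec, hinv, one_mulVec]
  have h1 : (A⁻¹ *ᵥ Pi.single i 1) i = A⁻¹ i i := by simp [mulVec_single]
  rw [hAw, dotProduct_single, h1, mul_one]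
  ring

private lemma diag_le {B : Matrix l l ℝ} (hB : B.PosDef) (f : m → l)
    (hf : Function.Injective f) (i : m) :
    (B.submatrix f f)⁻¹ i i ≤ B⁻¹ (f i) (f i) := by
  have hA : (B.submatrix f f).PosDef := posdef_submatrix hB f hf
  set x : m → ℝ := (B.submatrix f f)⁻¹ *ᵥ Pi.single i 1 with hx
  have h1 : (B.submatrix f f)⁻¹ i i = 2 * x i - x ⬝ᵥ (B.submatrix f f) *ᵥ x :=
    (eq_inv hA i).symm
  have h2 : Function.extend f x 0 (f i) = x i := hf.extend_apply _ _ _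
  calc (B.submatrix f f)⁻¹ i i
      = 2 * Function.extend f x 0 (f i)
        - Function.extend f x 0 ⬝ᵥ B *ᵥ Function.extend f x 0 := by
        rw [h2, quad_extend B f hf]; exact h1
    _ ≤ B⁻¹ (f i) (f i) := self_le hB (f i) _

end Aux

theorem attractive_variance_monotone {n : ℕ} (J : Matrix (Fin n) (Fin n) ℝ)
    (hPD : J.PosDef) (hdiag : ∀ i, J i i = 1)
    (hattr : ∀ i j, 0 ≤ ((1 : Matrix (Fin n) (Fin n) ℝ) - J) i j)
    (S₁ S₂ : Finset (Fin n)) (hsub : S₁ ⊆ S₂)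
    (i : Fin n) (hi : i ∉ S₂) :
    ((J.submatrix (fun x : {y // y ∈ S₂ᶜ} => (x : Fin n))
        (fun x : {y // y ∈ S₂ᶜ} => (x : Fin n)))⁻¹
        ⟨i, Finset.mem_compl.mpr hi⟩ ⟨i, Finset.mem_compl.mpr hi⟩ ≤
      (J.submatrix (fun x : {y // y ∈ S₁ᶜ} => (x : Fin n))
        (fun x : {y // y ∈ S₁ᶜ} => (x : Fin n)))⁻¹
        ⟨i, Finset.mem_compl.mpr (fun h => hi (hsub h))⟩
        ⟨i, Finset.mem_compl.mpr (fun h => hi (hsub h))⟩) ∧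
    ((J.submatrix (fun x : {y // y ∈ S₁ᶜ} => (x : Fin n))
        (fun x : {y // y ∈ S₁ᶜ} => (x : Fin n)))⁻¹
        ⟨i, Finset.mem_compl.mpr (fun h => hi (hsub h))⟩
        ⟨i, Finset.mem_compl.mpr (fun h => hi (hsub h))⟩ ≤ J⁻¹ i i) := by
  have hmem₂ : i ∈ S₂ᶜ := Finset.mem_compl.mpr hi
  constructor
  · -- S₂ᶜ ⊆ S₁ᶜ : drop more rows
    set B := J.submatrix (fun x : {y // y ∈ S₁ᶜ} => (x : Fin n))
        (fun x : {y // y ∈ S₁ᶜ} => (x : Fin n)) with hB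
    have hBpd : B.PosDef := posdef_submatrix hPD _ Subtype.val_injective
    set g : {y // y ∈ S₂ᶜ} → {y // y ∈ S₁ᶜ} :=
      fun x => ⟨x.1, Finset.mem_compl.mpr fun h => Finset.mem_compl.mp x.2 (hsub h)⟩ with hg
    have hginj : Function.Injective g := by
      intro a b h
      have h' : (g a).val = (g b).val := congrArg Subtype.val h
      exact Subtype.ext h'
    have := diag_le hBpd g hginj ⟨i, hmem₂⟩
    rw [Matrix.submatrix_submatrix] at this
    exact this
  · exact diag_le hPD (fun x : {y // y ∈ S₁ᶜ} => (x : Fin n))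
      Subtype.val_injective ⟨i, Finset.mem_compl.mpr (fun h => hi (hsub h))⟩
end

section
/- Let J be an n×n symmetric positive definite matrix with unit diagonal and let R = I - J. If the graph of J (edges where J_{ij} ≠ 0, i ≠ j) is a forest (contains no cycles), then ρ(R̄) < 1, where R̄ is the entrywise absolute value of R. -/
open Matrix

/-- The spectral radius of a real matrix: the largest modulus of its (complex) eigenvalues. -/
noncomputable def specRad {α : Type*} [Fintype α] [DecidableEq α] (A : Matrix α α ℝ) : ℝ :=
  sSup ((fun z : ℂ => ‖z‖) '' spectrum ℂ (A.map (fun x : ℝ => (x : ℂ))))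

/-- Product of an edge weight function along a walk. -/
noncomputable def wprod {V : Type*} {G : SimpleGraph V} (ε : V → V → ℝ) {u v : V}
    (p : G.Walk u v) : ℝ :=
  (p.darts.map fun d => ε d.toProd.1 d.toProd.2).prod

lemma wprod_append {V : Type*} {G : SimpleGraph V} (ε : V → V → ℝ) {u v w : V}
    (p : G.Walk u v) (q : G.Walk v w) :
    wprod ε (p.append q) = wprod ε p * wprod ε q := by
  simp [wprod, SimpleGraph.Walk.darts_append]

lemma wprod_concat {V : Type*} {G : SimpleGraph V} (ε : V → V → ℝ) {u v w : V}
    (p : G.Walk u v) (h : G.Adj v w) :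
    wprod ε (p.concat h) = wprod ε p * ε v w := by
  simp [wprod, SimpleGraph.Walk.darts_concat]

lemma wprod_singleton {V : Type*} {G : SimpleGraph V} (ε : V → V → ℝ) {u v : V}
    (h : G.Adj u v) :
    wprod ε (SimpleGraph.Walk.cons h SimpleGraph.Walk.nil) = ε u v := by
  simp [wprod]

lemma list_prod_pm (l : List ℝ) (h : ∀ x ∈ l, x = 1 ∨ x = -1) :
    l.prod = 1 ∨ l.prod = -1 := by
  induction l with
  | nil => simp
  | cons a t ih =>
    have ha := h a (by simp)
    have ht := ih (fun x hx => h x (by simp [hx]))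
    rcases ha with ha | ha <;> rcases ht with ht | ht <;> simp [ha, ht]

lemma wprod_pm {V : Type*} {G : SimpleGraph V} {ε : V → V → ℝ}
    (hpm : ∀ i j, ε i j = 1 ∨ ε i j = -1) {u v : V} (p : G.Walk u v) :
    wprod ε p = 1 ∨ wprod ε p = -1 := by
  apply list_prod_pm
  intro x hx
  obtain ⟨d, _, rfl⟩ := List.mem_map.mp hx
  exact hpm _ _

lemma wprod_key {V : Type*} [DecidableEq V] {G : SimpleGraph V} (hforest : G.IsAcyclic)
    {ε : V → V → ℝ} (hsym : ∀ i j, ε i j = ε j i) (hpm : ∀ i j, ε i j = 1 ∨ ε i j = -1)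
    {r r' i j : V} (hr : r = r') (hadj : G.Adj i j)
    {p : G.Walk r i} (hp : p.IsPath) {q : G.Walk r' j} (hq : q.IsPath) :
    wprod ε q = wprod ε p * ε i j := by
  subst hr
  have huniq := SimpleGraph.isAcyclic_iff_path_unique.mp hforest
  by_cases hj : j ∈ p.support
  · have h1 : p.takeUntil j hj = q := by
      have := huniq ⟨p.takeUntil j hj, hp.takeUntil hj⟩ ⟨q, hq⟩
      exact congrArg Subtype.val this
    have h2 : p.dropUntil j hj = SimpleGraph.Walk.cons hadj.symm SimpleGraph.Walk.nil := by
      have := huniq ⟨p.dropUntil j hj, hp.dropUntil hj⟩ (SimpleGraph.Path.singleton hadj.symm)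
      exact congrArg Subtype.val this
    have h3 : wprod ε p = wprod ε q * ε j i := by
      conv_lhs => rw [← SimpleGraph.Walk.take_spec p hj]
      rw [wprod_append, h1, h2, wprod_singleton]
    rw [hsym i j, h3]
    rcases hpm j i with he | he <;> rw [he] <;> ring
  · have hcp : (p.concat hadj).IsPath := by
      rw [SimpleGraph.Walk.isPath_def, SimpleGraph.Walk.support_concat]
      rw [SimpleGraph.Walk.isPath_def] at hp
      simp [List.nodup_append, hp, hj]
      exact fun a ha h => hj (h ▸ ha)
    have h1 : p.concat hadj = q := by
      have := huniq ⟨p.concat hadj, hcp⟩ ⟨q, hq⟩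
      exact congrArg Subtype.val this
    rw [← h1, wprod_concat]

lemma exists_sign {V : Type*} [DecidableEq V] (G : SimpleGraph V) (hforest : G.IsAcyclic)
    (ε : V → V → ℝ) (hsym : ∀ i j, ε i j = ε j i) (hpm : ∀ i j, ε i j = 1 ∨ ε i j = -1) :
    ∃ s : V → ℝ, (∀ i, s i = 1 ∨ s i = -1) ∧ ∀ i j, G.Adj i j → s i * s j = ε i j := by
  classical
  have hout_eq : ∀ c : G.ConnectedComponent, G.connectedComponentMk c.out = c := fun c =>
    Quot.out_eq c
  have hreach : ∀ i : V, G.Reachable ((G.connectedComponentMk i).out) i := fun i =>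
    SimpleGraph.ConnectedComponent.exact (hout_eq _)
  let P : ∀ i : V, G.Path ((G.connectedComponentMk i).out) i := fun i =>
    ((hreach i).some).toPath
  refine ⟨fun i => wprod ε (P i).val, fun i => wprod_pm hpm _, ?_⟩
  intro i j hadj
  have hout : (G.connectedComponentMk i).out = (G.connectedComponentMk j).out := by
    rw [SimpleGraph.ConnectedComponent.sound hadj.reachable]
  have key : wprod ε (P j).val = wprod ε (P i).val * ε i j :=
    wprod_key hforest hsym hpm hout hadj (P i).2 (P j).2
  show wprod ε (P i).val * wprod ε (P j).val = ε i j
  rw [key]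
  rcases wprod_pm hpm (P i).val with h | h <;> rw [h] <;> ring

theorem forest_model_walk_summable {n : ℕ} (J : Matrix (Fin n) (Fin n) ℝ)
    (hPD : J.PosDef) (hdiag : ∀ i, J i i = 1)
    (G : SimpleGraph (Fin n))
    (hG : ∀ i j, G.Adj i j ↔ i ≠ j ∧ J i j ≠ 0)
    (hforest : G.IsAcyclic) :
    specRad (Matrix.of fun i j => |((1 : Matrix (Fin n) (Fin n) ℝ) - J) i j|) < 1 := by
  classical
  set R : Matrix (Fin n) (Fin n) ℝ := (1 : Matrix (Fin n) (Fin n) ℝ) - J with hR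
  set A : Matrix (Fin n) (Fin n) ℝ := Matrix.of fun i j => |R i j| with hA
  have hJsymm : ∀ i j, J i j = J j i := by
    intro i j
    have := hPD.isHermitian
    rw [Matrix.IsHermitian] at this
    conv_rhs => rw [← this]
    simp [Matrix.conjTranspose_apply]
  have hRsymm : ∀ i j, R i j = R j i := by
    intro i j
    simp [hR, Matrix.sub_apply, hJsymm i j, Matrix.one_apply, eq_comm]
  have hRdiag : ∀ i, R i i = 0 := by
    intro i
    simp [hR, Matrix.sub_apply, Matrix.one_apply, hdiag i]
  -- sign vector
  set ε : Fin n → Fin n → ℝ := fun i j => if R i j < 0 then -1 else 1 with hε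
  have hsym : ∀ i j, ε i j = ε j i := by intro i j; simp [hε, hRsymm i j]
  have hpm : ∀ i j, ε i j = 1 ∨ ε i j = -1 := by
    intro i j; by_cases h : R i j < 0 <;> simp [hε, h]
  obtain ⟨s, hs, hsadj⟩ := exists_sign G hforest ε hsym hpm
  have hsq : ∀ i, s i * s i = 1 := by
    intro i; rcases hs i with h | h <;> rw [h] <;> norm_num
  have hkey : ∀ i j, |R i j| = s i * R i j * s j := by
    intro i j
    by_cases hz : R i j = 0
    · simp [hz]
    · have hij : i ≠ j := by
        intro h; subst h; exact hz (hRdiag i)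
      have hJij : J i j ≠ 0 := by
        intro h
        apply hz
        simp [hR, Matrix.sub_apply, Matrix.one_apply_ne hij, h]
      have hadj : G.Adj i j := (hG i j).mpr ⟨hij, hJij⟩
      have h1 : s i * s j = ε i j := hsadj i j hadj
      have h2 : s i * R i j * s j = ε i j * R i j := by
        rw [← h1]; ring
      rw [h2, hε]
      by_cases hneg : R i j < 0
      · simp only [hneg, if_pos]
        rw [abs_of_neg hneg]; ring
      · have hpos : 0 < R i j := lt_of_le_of_ne (not_lt.mp hneg) (Ne.symm hz)
        simp only [hneg, if_neg, if_false]
        rw [abs_of_pos hpos]; ring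
  -- quadratic form bound
  have hquad : ∀ x : Fin n → ℝ, x ≠ 0 → x ⬝ᵥ (A *ᵥ x) < x ⬝ᵥ x := by
    intro x hx
    set y : Fin n → ℝ := fun i => s i * x i with hy
    have hyne : y ≠ 0 := by
      intro h0
      apply hx
      funext i
      have h1 : s i * x i = 0 := congrFun h0 i
      show x i = (0 : Fin n → ℝ) i
      rw [Pi.zero_apply]
      rcases hs i with h | h <;> rw [h] at h1 <;> linarith
    have h1 : x ⬝ᵥ (A *ᵥ x) = y ⬝ᵥ (R *ᵥ y) := by
      simp only [dotProduct, Matrix.mulVec, dotProduct]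
      apply Finset.sum_congr rfl
      intro i _
      rw [Finset.mul_sum, Finset.mul_sum]
      apply Finset.sum_congr rfl
      intro j _
      have : A i j = s i * R i j * s j := by
        rw [hA]; exact hkey i j
      rw [this, hy]
      ring
    have h2 : y ⬝ᵥ (R *ᵥ y) = y ⬝ᵥ y - y ⬝ᵥ (J *ᵥ y) := by
      rw [hR, Matrix.sub_mulVec, dotProduct_sub, Matrix.one_mulVec]
    have h3 : 0 < y ⬝ᵥ (J *ᵥ y) := by
      have := hPD.dotProduct_mulVec_pos hyne
      simpa using this
    have h4 : y ⬝ᵥ y = x ⬝ᵥ x := by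
      simp only [dotProduct, hy]
      apply Finset.sum_congr rfl
      intro i _
      have := hsq i
      nlinarith [hsq i]
    rw [h1, h2, h4]
    linarith
  -- eigenvalue bound
  have heig : ∀ μ ∈ spectrum ℂ (A.map (fun x : ℝ => (x : ℂ))), ‖μ‖ < 1 := by
    intro μ hμ
    set M := A.map (fun x : ℝ => (x : ℂ)) with hM
    have hμ' : μ ∈ spectrum ℂ (Matrix.toLinAlgEquiv' M) := by
      rw [AlgEquiv.spectrum_eq]
      exact hμ
    have hev : Module.End.HasEigenvalue (Matrix.toLinAlgEquiv' M) μ :=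
      Module.End.hasEigenvalue_iff_mem_spectrum.mpr hμ'
    obtain ⟨v, hv⟩ := hev.exists_hasEigenvector
    have hvne : v ≠ 0 := hv.right
    have hMv : M *ᵥ v = μ • v := by
      have := hv.apply_eq_smul
      rwa [Matrix.toLinAlgEquiv'_apply] at this
    set w : Fin n → ℝ := fun i => ‖v i‖ with hw
    have hwnn : ∀ i, 0 ≤ w i := fun i => norm_nonneg _
    have hwne : w ≠ 0 := by
      intro h0
      apply hvne
      funext i
      have h1 : ‖v i‖ = 0 := congrFun h0 i
      show v i = (0 : Fin n → ℂ) i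
      rw [Pi.zero_apply]
      exact norm_eq_zero.mp h1
    have hAnn : ∀ i j, 0 ≤ A i j := by
      intro i j; rw [hA]; exact abs_nonneg _
    have hpoint : ∀ i, ‖μ‖ * w i ≤ (A *ᵥ w) i := by
      intro i
      have h1 : ‖μ‖ * w i = ‖(M *ᵥ v) i‖ := by
        rw [hMv]
        simp [hw, norm_mul]
      rw [h1]
      have h2 : (M *ᵥ v) i = ∑ j, M i j * v j := rfl
      rw [h2]
      calc ‖∑ j, M i j * v j‖ ≤ ∑ j, ‖M i j * v j‖ :=
            norm_sum_le _ _
        _ = ∑ j, A i j * w j := by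
            apply Finset.sum_congr rfl
            intro j _
            rw [norm_mul]
            have : ‖M i j‖ = A i j := by
              simp [hM, Matrix.map_apply, Complex.norm_real, Real.norm_eq_abs, abs_of_nonneg (hAnn i j)]
            rw [this, hw]
        _ = (A *ᵥ w) i := rfl
    have hd : 0 < w ⬝ᵥ w := by
      rcases Function.ne_iff.mp hwne with ⟨i, hi⟩
      have : 0 < w i * w i := by
        have := hwnn i
        have hne : w i ≠ 0 := hi
        positivity
      apply Finset.sum_pos' (fun j _ => mul_self_nonneg (w j))
      exact ⟨i, Finset.mem_univ i, this⟩
    have hle : ‖μ‖ * (w ⬝ᵥ w) ≤ w ⬝ᵥ (A *ᵥ w) := by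
      rw [dotProduct, dotProduct, Finset.mul_sum]
      apply Finset.sum_le_sum
      intro i _
      calc ‖μ‖ * (w i * w i) = w i * (‖μ‖ * w i) := by ring
        _ ≤ w i * (A *ᵥ w) i := mul_le_mul_of_nonneg_left (hpoint i) (hwnn i)
    have hlt : w ⬝ᵥ (A *ᵥ w) < w ⬝ᵥ w := hquad w hwne
    have : ‖μ‖ * (w ⬝ᵥ w) < 1 * (w ⬝ᵥ w) := by
      rw [one_mul]; exact lt_of_le_of_lt hle hlt
    exact lt_of_mul_lt_mul_right this (le_of_lt hd)
  -- conclude about sSup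
  rw [specRad]
  set S := (fun z : ℂ => ‖z‖) '' spectrum ℂ (A.map (fun x : ℝ => (x : ℂ))) with hS
  have hSfin : S.Finite := (Matrix.finite_spectrum _).image _
  rcases Set.eq_empty_or_nonempty S with h | h
  · rw [h, Real.sSup_empty]; norm_num
  · have hmem : sSup S ∈ S := Set.Nonempty.csSup_mem h hSfin
    obtain ⟨μ, hμ, hμ2⟩ := hmem
    rw [← hμ2]
    exact heig μ hμ
end
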